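/- arXiv:1711.05729 — 3 statements merged into one kernel-verified Lean document; each statement's English description precedes it below -/
import Mathlib

section
/- Let H be a Hilbert space, let f : ℕ → H be a bounded sequence and let W ∈ F₁. If for every d ∈ ℕ the uniform Riesz mean with respect to W of the sequence n ↦ ⟨f(n+d), f(n)⟩ equals 0, then the uniform Riesz mean with respect to W of f equals 0 in norm: for every ε > 0 there is l such that ‖E^W_{[M,N]} f‖ < ε whenever W(N) − W(M) ≥ l. -/
open Filter MeasureTheory Finset
open scoped ENNReal Classical

noncomputable section

/-- Discrete derivative (first order difference) of a real sequence. -/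
def dd (f : ℕ → ℝ) : ℕ → ℝ := fun n => f (n + 1) - f n

/-- Discrete derivative of an integer sequence. -/
def ddZ (f : ℕ → ℤ) : ℕ → ℤ := fun n => f (n + 1) - f n

/-- Membership in the class `F_ℓ`:  `F₀` consists of eventually monotone sequences tending
to `0` whose series diverges in absolute value; `F_{ℓ+1} = {f : Δf ∈ F_ℓ}`. -/
def MemF : ℕ → (ℕ → ℝ) → Prop
  | 0 => fun f =>
      (∃ N : ℕ, (∀ m n, N ≤ m → m ≤ n → f m ≤ f n) ∨ (∀ m n, N ≤ m → m ≤ n → f n ≤ f m)) ∧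
      Tendsto f atTop (nhds 0) ∧
      Tendsto (fun N => |∑ n ∈ Finset.Icc 1 N, f n|) atTop atTop
  | (ℓ + 1) => fun f => MemF ℓ (dd f)

/-- `R ⊆ ℕ` is `W`-syndetic. -/
def WSyndetic (W : ℕ → ℝ) (R : Set ℕ) : Prop :=
  ∃ l : ℕ, ∀ M N : ℕ, M ≤ N → (l : ℝ) ≤ W N - W M →
    1 ≤ ∑ n ∈ Finset.Icc M N, Set.indicator R (dd W) n

/-- `R ⊆ ℕ` is thick: it contains arbitrarily long intervals. -/
def Thick (R : Set ℕ) : Prop := ∀ k : ℕ, ∃ a : ℕ, ∀ i ≤ k, a + i ∈ R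

/-- The uniform Riesz mean (with respect to `W`) of the sequence `a` equals `L`. -/
def UWLim {E : Type*} [NormedAddCommGroup E] [NormedSpace ℝ E]
    (W : ℕ → ℝ) (a : ℕ → E) (L : E) : Prop :=
  ∀ ε : ℝ, 0 < ε → ∃ l : ℕ, ∀ M N : ℕ, M ≤ N → (l : ℝ) ≤ W N - W M →
    ‖(W N - W M)⁻¹ • ∑ n ∈ Finset.Icc M N, dd W n • a n - L‖ < ε

/-- `x : ℕ → G` is `μ`-well distributed with respect to the uniform Riesz mean along `W`. -/
def WellDistributed {G : Type*} [TopologicalSpace G] [MeasurableSpace G]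
    (W : ℕ → ℝ) (x : ℕ → G) (μ : Measure G) : Prop :=
  ∀ F : C(G, ℂ), UWLim W (fun n => F (x n)) (∫ g, F g ∂μ)

/-- `p(Δ)f` for an integer polynomial `p`. -/
def polyDelta (p : Polynomial ℤ) (f : ℕ → ℝ) : ℕ → ℝ :=
  fun n => ∑ j ∈ Finset.range (p.natDegree + 1), (p.coeff j : ℝ) * dd^[j] f n

/-- `E ⊆ ℕ` has positive upper Banach density. -/
def PosUpperBanach (E : Set ℕ) : Prop :=
  0 < Filter.limsup (fun N : ℕ =>
    ⨆ M : ℕ, (∑ n ∈ Finset.Ico M (M + N), Set.indicator E (fun _ => (1 : ℝ)) n) / N) atTop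

/-!
Write `w = ΔW`. If `w` is eventually nonpositive, `W N - W M` is bounded above and the claim is
vacuous. Otherwise `w` is eventually nonincreasing and nonnegative, and by boundedness of `f` only
windows `[M, N]` with `M` beyond that point matter. There, summation by parts shows that shifting a
`w`-weighted sum by `h` costs only `O(h · w M)`, so `H • ∑ w n • f n` is close to
`∑ w n • B n` with `B n = ∑_{h < H} f (n + h)`. By Cauchy–Schwarz the square of the latter is at
most `(∑ w n) · ∑ w n ‖B n‖²`; expanding `‖B n‖²`, the `H` diagonal terms contribute
`O(H (∑ w n) C²)`, and the off-diagonal ones are shifted correlations `∑ w n ⟪f (n + d), f n⟫`,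
which are `o(W N - W M)` by hypothesis. Hence the normalized sum is `O(C / √H) + o(1)`, and `H`
is arbitrary.
-/

section AntitoneWeights

variable {E : Type*} [NormedAddCommGroup E] [NormedSpace ℝ E] {w : ℕ → ℝ} {a : ℕ → E}
  {K : ℝ} {M N : ℕ}

lemma sum_Icc_smul_shift_one_sub (w : ℕ → ℝ) (a : ℕ → E) (hMN : M ≤ N) :
    ∑ n ∈ Icc M N, w n • a (n + 1) - ∑ n ∈ Icc M N, w n • a n =
      ∑ n ∈ Icc M N, (w n - w (n + 1)) • a (n + 1) + w (N + 1) • a (N + 1) - w M • a M := by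
  induction N, hMN using Nat.le_induction with
  | base => simp only [Icc_self, sum_singleton, sub_smul]; abel
  | succ N hMN ih =>
    rw [sum_Icc_succ_top (by omega), sum_Icc_succ_top (by omega), sum_Icc_succ_top (by omega)]
    linear_combination (norm := module) ih

lemma norm_sum_Icc_smul_shift_one_sub_le (ha : ∀ n, ‖a n‖ ≤ K) (hw : ∀ n, M ≤ n → 0 ≤ w n)
    (hanti : ∀ n, M ≤ n → w (n + 1) ≤ w n) (hMN : M ≤ N) :
    ‖∑ n ∈ Icc M N, w n • a (n + 1) - ∑ n ∈ Icc M N, w n • a n‖ ≤ 2 * K * w M := by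
  have hnorm : ∀ n, M ≤ n → ‖w n • a n‖ ≤ w n * K := fun n hn => by
    rw [norm_smul, Real.norm_of_nonneg (hw n hn)]; exact mul_le_mul_of_nonneg_left (ha n) (hw n hn)
  have hsum : ‖∑ n ∈ Icc M N, (w n - w (n + 1)) • a (n + 1)‖ ≤ (w M - w (N + 1)) * K := calc
    _ ≤ ∑ n ∈ Icc M N, (w n - w (n + 1)) * K := by
      refine norm_sum_le_of_le _ fun n hn => ?_
      have hn := (mem_Icc.1 hn).1
      rw [norm_smul, Real.norm_of_nonneg (sub_nonneg.2 (hanti n hn))]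
      exact mul_le_mul_of_nonneg_left (ha _) (sub_nonneg.2 (hanti n hn))
    _ = (w M - w (N + 1)) * K := by
      rw [← sum_mul, ← neg_sub, ← sum_Icc_sub hMN w, ← sum_neg_distrib]
      simp only [neg_sub]
  rw [sum_Icc_smul_shift_one_sub w a hMN]
  have h1 := hnorm (N + 1) (by omega)
  have h2 := hnorm M le_rfl
  have := norm_sub_le_of_le (norm_add_le_of_le hsum h1) h2
  linarith

lemma norm_sum_Icc_smul_shift_sub_le (ha : ∀ n, ‖a n‖ ≤ K) (hw : ∀ n, M ≤ n → 0 ≤ w n)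
    (hanti : ∀ n, M ≤ n → w (n + 1) ≤ w n) (hMN : M ≤ N) (m : ℕ) :
    ‖∑ n ∈ Icc M N, w n • a (n + m) - ∑ n ∈ Icc M N, w n • a n‖ ≤ 2 * m * K * w M := by
  induction m with
  | zero => simp
  | succ m ih =>
    have hstep := norm_sum_Icc_smul_shift_one_sub_le (a := fun n => a (n + m)) (fun n => ha _)
      hw hanti hMN
    simp only [add_right_comm _ 1 m] at hstep
    calc _ ≤ _ := norm_sub_le_norm_sub_add_norm_sub _ (∑ n ∈ Icc M N, w n • a (n + m)) _
      _ ≤ 2 * K * w M + 2 * m * K * w M := add_le_add hstep ih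
      _ = _ := by push_cast; ring

lemma norm_smul_sum_sub_sum_smul_sum_range_le (ha : ∀ n, ‖a n‖ ≤ K)
    (hw : ∀ n, M ≤ n → 0 ≤ w n) (hanti : ∀ n, M ≤ n → w (n + 1) ≤ w n) (hMN : M ≤ N) (H : ℕ) :
    ‖(H : ℝ) • ∑ n ∈ Icc M N, w n • a n - ∑ n ∈ Icc M N, w n • ∑ h ∈ range H, a (n + h)‖ ≤
      2 * H ^ 2 * K * w M := by
  have hK : 0 ≤ K := (norm_nonneg _).trans (ha 0)
  have hwM : 0 ≤ w M := hw M le_rfl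
  have hswap : ∑ n ∈ Icc M N, w n • ∑ h ∈ range H, a (n + h) =
      ∑ h ∈ range H, ∑ n ∈ Icc M N, w n • a (n + h) := by
    simp_rw [smul_sum]; exact sum_comm
  have hconst : (H : ℝ) • ∑ n ∈ Icc M N, w n • a n = ∑ _h ∈ range H, ∑ n ∈ Icc M N, w n • a n := by
    rw [sum_const, card_range, Nat.cast_smul_eq_nsmul]
  rw [hswap, hconst, ← sum_sub_distrib]
  calc _ ≤ ∑ h ∈ range H, 2 * H * K * w M := by
        refine norm_sum_le_of_le _ fun h hh => ?_
        rw [norm_sub_rev]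
        refine (norm_sum_Icc_smul_shift_sub_le ha hw hanti hMN h).trans ?_
        have : (h : ℝ) ≤ H := by exact_mod_cast (mem_range.1 hh).le
        gcongr
    _ = _ := by rw [sum_const, card_range, nsmul_eq_mul]; ring

end AntitoneWeights

lemma norm_sum_smul_sq_le {ι E : Type*} [NormedAddCommGroup E] [NormedSpace ℝ E] (s : Finset ι)
    {w : ι → ℝ} (hw : ∀ i ∈ s, 0 ≤ w i) (b : ι → E) :
    ‖∑ i ∈ s, w i • b i‖ ^ 2 ≤ (∑ i ∈ s, w i) * ∑ i ∈ s, w i * ‖b i‖ ^ 2 := calc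
  _ ≤ (∑ i ∈ s, w i * ‖b i‖) ^ 2 := by
    gcongr
    refine norm_sum_le_of_le _ fun i hi => ?_
    rw [norm_smul, Real.norm_of_nonneg (hw i hi)]
  _ ≤ _ := sum_sq_le_sum_mul_sum_of_sq_le_mul s hw
      (fun i hi => mul_nonneg (hw i hi) (sq_nonneg _)) fun i _ => (by ring : (w i * ‖b i‖) ^ 2 = _).le

section InnerProduct

variable {E : Type*} [NormedAddCommGroup E] [InnerProductSpace ℂ E] {f : ℕ → E} {C : ℝ}
  {w : ℕ → ℝ} {M N : ℕ}

lemma norm_sum_sq_eq_sum_sum_re_inner {ι : Type*} (s : Finset ι) (x : ι → E) :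
    ‖∑ i ∈ s, x i‖ ^ 2 = ∑ i ∈ s, ∑ j ∈ s, (inner ℂ (x i) (x j)).re := by
  rw [← inner_self_eq_norm_sq (𝕜 := ℂ), sum_inner, RCLike.re_to_complex, Complex.re_sum]
  simp_rw [inner_sum, Complex.re_sum]

lemma norm_sum_Icc_smul_inner_shift_le (hC : ∀ n, ‖f n‖ ≤ C) (hw : ∀ n, M ≤ n → 0 ≤ w n)
    (hanti : ∀ n, M ≤ n → w (n + 1) ≤ w n) (hMN : M ≤ N) {d : ℕ} {δ : ℝ}
    (hd : ‖∑ n ∈ Icc M N, w n • inner ℂ (f (n + d)) (f n)‖ ≤ δ) (h : ℕ) :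
    ‖∑ n ∈ Icc M N, w n • inner ℂ (f (n + h + d)) (f (n + h))‖ ≤ δ + 2 * h * C ^ 2 * w M := by
  have hcorr : ∀ n, ‖inner ℂ (f (n + d)) (f n)‖ ≤ C ^ 2 := fun n =>
    (norm_inner_le_norm _ _).trans <| by
      rw [sq]; exact mul_le_mul (hC _) (hC _) (norm_nonneg _) ((norm_nonneg _).trans (hC 0))
  have := norm_sum_Icc_smul_shift_sub_le hcorr hw hanti hMN h
  linarith [norm_le_norm_sub_add (∑ n ∈ Icc M N, w n • inner ℂ (f (n + h + d)) (f (n + h)))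
    (∑ n ∈ Icc M N, w n • inner ℂ (f (n + d)) (f n))]

lemma sum_Icc_mul_re_inner_le_of_ne (hC : ∀ n, ‖f n‖ ≤ C) (hw : ∀ n, M ≤ n → 0 ≤ w n)
    (hanti : ∀ n, M ≤ n → w (n + 1) ≤ w n) (hMN : M ≤ N) {H : ℕ} {δ : ℝ}
    (hδ : ∀ d, 1 ≤ d → d < H → ‖∑ n ∈ Icc M N, w n • inner ℂ (f (n + d)) (f n)‖ ≤ δ)
    {h h' : ℕ} (hh : h < H) (hh' : h' < H) (hne : h ≠ h') :
    ∑ n ∈ Icc M N, w n * (inner ℂ (f (n + h)) (f (n + h'))).re ≤ δ + 2 * H * C ^ 2 * w M := by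
  wlog hlt : h' < h generalizing h h'
  · refine le_of_eq_of_le (sum_congr rfl fun n _ => ?_) (this hh' hh hne.symm (by omega))
    rw [← inner_conj_symm, Complex.conj_re]
  obtain ⟨d, rfl⟩ := Nat.exists_eq_add_of_lt hlt
  have hbound := norm_sum_Icc_smul_inner_shift_le hC hw hanti hMN
    (hδ (d + 1) (by omega) (by omega)) h'
  have hH : (h' : ℝ) ≤ H := by exact_mod_cast hh'.le
  calc _ = (∑ n ∈ Icc M N, w n • inner ℂ (f (n + h' + (d + 1))) (f (n + h'))).re := by
        simp only [Complex.re_sum, Complex.real_smul, Complex.re_ofReal_mul, ← add_assoc]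
    _ ≤ _ := (Complex.re_le_norm _).trans (hbound.trans (by gcongr; exact hw M le_rfl))

lemma sum_Icc_mul_norm_sum_range_sq_le (hC : ∀ n, ‖f n‖ ≤ C) (hw : ∀ n, M ≤ n → 0 ≤ w n)
    (hanti : ∀ n, M ≤ n → w (n + 1) ≤ w n) (hMN : M ≤ N) {H : ℕ} {δ : ℝ} (hδ0 : 0 ≤ δ)
    (hδ : ∀ d, 1 ≤ d → d < H → ‖∑ n ∈ Icc M N, w n • inner ℂ (f (n + d)) (f n)‖ ≤ δ) :
    ∑ n ∈ Icc M N, w n * ‖∑ h ∈ range H, f (n + h)‖ ^ 2 ≤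
      H * (∑ n ∈ Icc M N, w n) * C ^ 2 + H ^ 2 * (δ + 2 * H * C ^ 2 * w M) := by
  set A := ∑ n ∈ Icc M N, w n
  have hoff : 0 ≤ δ + 2 * H * C ^ 2 * w M := by have := hw M le_rfl; positivity
  calc _ = ∑ h ∈ range H, ∑ h' ∈ range H,
        ∑ n ∈ Icc M N, w n * (inner ℂ (f (n + h)) (f (n + h'))).re := by
        simp only [norm_sum_sq_eq_sum_sum_re_inner, mul_sum]
        rw [sum_comm]; exact sum_congr rfl fun _ _ => sum_comm
    _ ≤ ∑ h ∈ range H, ∑ h' ∈ range H,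
          ((if h = h' then A * C ^ 2 else 0) + (δ + 2 * H * C ^ 2 * w M)) := by
        gcongr with h hh h' hh'
        split_ifs with heq
        · subst heq
          refine le_add_of_le_of_nonneg ?_ hoff
          rw [sum_mul]
          refine sum_le_sum fun n hn => ?_
          rw [← RCLike.re_to_complex, inner_self_eq_norm_sq]
          exact mul_le_mul_of_nonneg_left (pow_le_pow_left₀ (norm_nonneg _) (hC _) 2)
            (hw n (mem_Icc.1 hn).1)
        · rw [zero_add]
          exact sum_Icc_mul_re_inner_le_of_ne hC hw hanti hMN hδ (mem_range.1 hh)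
            (mem_range.1 hh') heq
    _ = ∑ h ∈ range H, (A * C ^ 2 + H * (δ + 2 * H * C ^ 2 * w M)) :=
        sum_congr rfl fun h hh => by
          rw [sum_add_distrib, sum_ite_eq, if_pos hh, sum_const, card_range, nsmul_eq_mul]
    _ = _ := by rw [sum_const, card_range, nsmul_eq_mul]; ring

theorem norm_sum_Icc_smul_le_vdc (hC : ∀ n, ‖f n‖ ≤ C) (hw : ∀ n, M ≤ n → 0 ≤ w n)
    (hanti : ∀ n, M ≤ n → w (n + 1) ≤ w n) (hMN : M ≤ N) {H : ℕ} {δ : ℝ} (hδ0 : 0 ≤ δ)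
    (hδ : ∀ d, 1 ≤ d → d < H → ‖∑ n ∈ Icc M N, w n • inner ℂ (f (n + d)) (f n)‖ ≤ δ) :
    H * ‖∑ n ∈ Icc M N, w n • f n‖ ≤
      √((∑ n ∈ Icc M N, w n) *
        (H * (∑ n ∈ Icc M N, w n) * C ^ 2 + H ^ 2 * (δ + 2 * H * C ^ 2 * w M))) +
      2 * H ^ 2 * C * w M := by
  have hwIcc : ∀ n ∈ Icc M N, 0 ≤ w n := fun n hn => hw n (mem_Icc.1 hn).1
  have hblock : ‖∑ n ∈ Icc M N, w n • ∑ h ∈ range H, f (n + h)‖ ≤ √((∑ n ∈ Icc M N, w n) *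
      (H * (∑ n ∈ Icc M N, w n) * C ^ 2 + H ^ 2 * (δ + 2 * H * C ^ 2 * w M))) :=
    Real.le_sqrt_of_sq_le <| (norm_sum_smul_sq_le _ hwIcc _).trans <|
      mul_le_mul_of_nonneg_left (sum_Icc_mul_norm_sum_range_sq_le hC hw hanti hMN hδ0 hδ)
        (sum_nonneg hwIcc)
  calc (H : ℝ) * ‖∑ n ∈ Icc M N, w n • f n‖ = ‖(H : ℝ) • ∑ n ∈ Icc M N, w n • f n‖ := by
        rw [norm_smul, Real.norm_natCast]
    _ ≤ _ := norm_le_norm_add_norm_sub' _ (∑ n ∈ Icc M N, w n • ∑ h ∈ range H, f (n + h))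
    _ ≤ _ := add_le_add hblock (norm_smul_sum_sub_sum_smul_sum_range_le hC hw hanti hMN H)

end InnerProduct

section RieszMeans

variable {E : Type*} [NormedAddCommGroup E] [NormedSpace ℝ E] {W : ℕ → ℝ} {a : ℕ → E}

lemma uwLim_zero_iff : UWLim W a 0 ↔ ∀ ε > 0, ∃ l : ℝ, ∀ M N, M ≤ N → l ≤ W N - W M →
    ‖∑ n ∈ Icc M N, dd W n • a n‖ < ε * (W N - W M) := by
  have key : ∀ {M N : ℕ} {ε : ℝ}, 0 < W N - W M →
      (‖(W N - W M)⁻¹ • ∑ n ∈ Icc M N, dd W n • a n - 0‖ < ε ↔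
        ‖∑ n ∈ Icc M N, dd W n • a n‖ < ε * (W N - W M)) := fun hL => by
    rw [sub_zero, norm_smul, norm_inv, Real.norm_of_nonneg hL.le, inv_mul_lt_iff₀ hL, mul_comm]
  refine ⟨fun h ε hε => ?_, fun h ε hε => ?_⟩
  · obtain ⟨l, hl⟩ := h ε hε
    refine ⟨l + 1, fun M N hMN hL => ?_⟩
    have hpos : 0 < W N - W M := by linarith [l.cast_nonneg (α := ℝ)]
    exact (key hpos).1 (hl M N hMN (by linarith))
  · obtain ⟨l, hl⟩ := h ε hε
    obtain ⟨l', hl'⟩ := exists_nat_ge l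
    refine ⟨l', fun M N hMN hL => ?_⟩
    have hS := hl M N hMN (hl'.trans hL)
    have hpos : 0 < W N - W M := pos_of_mul_pos_right ((norm_nonneg _).trans_lt hS) hε.le
    exact (key hpos).2 hS

lemma uwLim_of_bddAbove (h : ∃ c, ∀ M N, M ≤ N → W N - W M ≤ c) (a : ℕ → E) (L : E) :
    UWLim W a L := by
  obtain ⟨c, hc⟩ := h
  obtain ⟨l, hl⟩ := exists_nat_gt c
  exact fun _ _ => ⟨l, fun M N hMN hL => absurd (hl.trans_le hL) (hc M N hMN).not_gt⟩

lemma sub_le_sum_range_abs_dd_of_nonpos {N₀ : ℕ} (h : ∀ n, N₀ ≤ n → dd W n ≤ 0) {M N : ℕ}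
    (hMN : M ≤ N) : W N - W M ≤ ∑ n ∈ range N₀, |dd W n| := calc
  W N - W M = ∑ n ∈ Ico M N, dd W n := (sum_Ico_sub W hMN).symm
  _ ≤ ∑ n ∈ Ico M N, if n < N₀ then |dd W n| else 0 := sum_le_sum fun n _ => by
    split_ifs with hn
    · exact le_abs_self _
    · exact h n (not_lt.1 hn)
  _ = ∑ n ∈ (Ico M N).filter (· < N₀), |dd W n| := (sum_filter _ _).symm
  _ ≤ ∑ n ∈ range N₀, |dd W n| := sum_le_sum_of_subset_of_nonneg
    (fun n hn => mem_range.2 (mem_filter.1 hn).2) fun n _ _ => abs_nonneg _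

lemma abs_sub_le_sum_range_abs_dd {N₀ M K : ℕ} (hMK : M ≤ K) (hK : K ≤ N₀) :
    |W K - W M| ≤ ∑ n ∈ range N₀, |dd W n| := by
  rw [← sum_Ico_sub W hMK]
  exact (abs_sum_le_sum_abs _ _).trans <| sum_le_sum_of_subset_of_nonneg
    (fun n hn => mem_range.2 ((mem_Ico.1 hn).2.trans_le hK)) fun n _ _ => abs_nonneg _

lemma uwLim_zero_of_forall_le {K : ℝ} {N₀ : ℕ} (ha : ∀ n, ‖a n‖ ≤ K)
    (h : ∀ ε > 0, ∃ l : ℝ, ∀ M N, N₀ ≤ M → M ≤ N → l ≤ W N - W M →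
      ‖∑ n ∈ Icc M N, dd W n • a n‖ < ε * (W N - W M)) :
    UWLim W a 0 := by
  rw [uwLim_zero_iff]
  intro ε hε
  set B := ∑ n ∈ range N₀, |dd W n|
  have hK : 0 ≤ K := (norm_nonneg _).trans (ha 0)
  have hB : 0 ≤ B := sum_nonneg fun _ _ => abs_nonneg _
  obtain ⟨l, hl⟩ := h (ε / 2) (half_pos hε)
  refine ⟨|l| + B + 2 * B * K / ε + 1, fun M N hMN hL => ?_⟩
  have hBK : 2 * B * K + ε * B + ε ≤ ε * (W N - W M) := by
    have := mul_le_mul_of_nonneg_left hL hε.le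
    rw [mul_add, mul_add, mul_add, mul_div_cancel₀ _ hε.ne'] at this
    nlinarith [abs_nonneg l]
  have hlL : |l| + B + 1 ≤ W N - W M := by linarith [(by positivity : 0 ≤ 2 * B * K / ε)]
  by_cases hM : N₀ ≤ M
  · exact (hl M N hM hMN (by linarith [le_abs_self l])).trans_le (by nlinarith)
  rw [not_le] at hM
  have hN : N₀ ≤ N := by
    by_contra! hN
    linarith [abs_nonneg l, le_abs_self (W N - W M), abs_sub_le_sum_range_abs_dd (W := W) hMN hN.le]
  have hstart := abs_le.1 (abs_sub_le_sum_range_abs_dd (W := W) hM.le le_rfl)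
  have hsplit : ∑ n ∈ Icc M N, dd W n • a n =
      ∑ n ∈ Ico M N₀, dd W n • a n + ∑ n ∈ Icc N₀ N, dd W n • a n := by
    rw [← Ico_add_one_right_eq_Icc, ← Ico_add_one_right_eq_Icc,
      sum_Ico_consecutive _ hM.le (by omega)]
  have hhead : ‖∑ n ∈ Ico M N₀, dd W n • a n‖ ≤ B * K := calc
    _ ≤ ∑ n ∈ Ico M N₀, |dd W n| * K := norm_sum_le_of_le _ fun n _ => by
      rw [norm_smul, Real.norm_eq_abs]; exact mul_le_mul_of_nonneg_left (ha n) (abs_nonneg _)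
    _ ≤ B * K := by
      rw [← sum_mul]
      exact mul_le_mul_of_nonneg_right (sum_le_sum_of_subset_of_nonneg
        (fun n hn => mem_range.2 (mem_Ico.1 hn).2) fun n _ _ => abs_nonneg _) hK
  have htail := hl N₀ N le_rfl hN (by linarith [le_abs_self l])
  rw [hsplit]
  calc _ ≤ _ := norm_add_le _ _
    _ < B * K + ε / 2 * (W N - W N₀) := add_lt_add_of_le_of_lt hhead htail
    _ ≤ ε * (W N - W M) := by nlinarith

lemma exists_forall_lt_of_uwLim_zero {g : ℕ → ℕ → E} (hg : ∀ d, 1 ≤ d → UWLim W (g d) 0)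
    (H : ℕ) {ε : ℝ} (hε : 0 < ε) :
    ∃ l : ℝ, ∀ d, 1 ≤ d → d < H → ∀ M N, M ≤ N → l ≤ W N - W M →
      ‖∑ n ∈ Icc M N, dd W n • g d n‖ < ε * (W N - W M) := by
  have hd : ∀ d, ∃ l : ℝ, 1 ≤ d → ∀ M N, M ≤ N → l ≤ W N - W M →
      ‖∑ n ∈ Icc M N, dd W n • g d n‖ < ε * (W N - W M) := fun d => by
    by_cases h1 : 1 ≤ d
    · obtain ⟨l, hl⟩ := uwLim_zero_iff.1 (hg d h1) ε hε
      exact ⟨l, fun _ => hl⟩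
    · exact ⟨0, fun h => absurd h h1⟩
  choose l hl using hd
  refine ⟨∑ d ∈ range H, |l d|, fun d h1 hdH M N hMN hL => hl d h1 M N hMN ?_⟩
  exact (le_abs_self _).trans <| (single_le_sum (f := fun d => |l d|)
    (fun _ _ => abs_nonneg _) (mem_range.2 hdH)).trans hL

end RieszMeans

lemma lt_mul_of_vdc_bound {H L ε C D A w s : ℝ} (hH : 0 < H) (hL : 0 < L) (hε : 0 < ε)
    (hC : 0 ≤ C) (hA0 : 0 ≤ A) (hA : A ≤ 2 * L) (hw0 : 0 ≤ w) (hw : w ≤ D)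
    (hHC : 48 * C ^ 2 ≤ H * ε ^ 2) (hL1 : 48 * H * D * C ^ 2 ≤ L * ε ^ 2)
    (hL2 : 8 * H * C * D ≤ L * ε)
    (hs : H * s ≤ √(A * (H * A * C ^ 2 + H ^ 2 * (ε ^ 2 / 48 * L + 2 * H * C ^ 2 * w))) +
      2 * H ^ 2 * C * w) :
    s < ε * L := by
  have hsqrt : √(A * (H * A * C ^ 2 + H ^ 2 * (ε ^ 2 / 48 * L + 2 * H * C ^ 2 * w))) ≤
      H * L * ε / 2 := by
    refine Real.sqrt_le_iff.2 ⟨by positivity, ?_⟩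
    calc _ ≤ 2 * L * (H * (2 * L) * C ^ 2 + H ^ 2 * (ε ^ 2 / 48 * L + 2 * H * C ^ 2 * D)) := by
          gcongr
      _ = H * L ^ 2 / 12 * (48 * C ^ 2) + H ^ 2 * L ^ 2 * ε ^ 2 / 24
          + H ^ 2 * L / 12 * (48 * H * D * C ^ 2) := by ring
      _ ≤ H * L ^ 2 / 12 * (H * ε ^ 2) + H ^ 2 * L ^ 2 * ε ^ 2 / 24
          + H ^ 2 * L / 12 * (L * ε ^ 2) := by gcongr
      _ ≤ (H * L * ε / 2) ^ 2 := by nlinarith [sq_nonneg (H * L * ε)]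
  have hcross : 2 * H ^ 2 * C * w ≤ H * L * ε / 4 := calc
    _ ≤ 2 * H ^ 2 * C * D := by gcongr
    _ = H / 4 * (8 * H * C * D) := by ring
    _ ≤ H / 4 * (L * ε) := by gcongr
    _ = _ := by ring
  refine lt_of_mul_lt_mul_left ?_ hH.le
  nlinarith [mul_pos (mul_pos hH hL) hε]

lemma exists_norm_sum_lt_of_vdc {E : Type*} [NormedAddCommGroup E] [InnerProductSpace ℂ E]
    {W : ℕ → ℝ} {f : ℕ → E} {C : ℝ} {N₀ : ℕ} (hC : ∀ n, ‖f n‖ ≤ C)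
    (hw : ∀ n, N₀ ≤ n → 0 ≤ dd W n) (hanti : ∀ m n, N₀ ≤ m → m ≤ n → dd W n ≤ dd W m)
    (hvdc : ∀ d : ℕ, 1 ≤ d → UWLim W (fun n => inner ℂ (f (n + d)) (f n)) 0)
    {ε : ℝ} (hε : 0 < ε) :
    ∃ l : ℝ, ∀ M N, N₀ ≤ M → M ≤ N → l ≤ W N - W M →
      ‖∑ n ∈ Icc M N, dd W n • f n‖ < ε * (W N - W M) := by
  have hC0 : 0 ≤ C := (norm_nonneg _).trans (hC 0)
  set D := dd W N₀
  have hD : 0 ≤ D := hw N₀ le_rfl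
  -- chosen so that the diagonal part `4 C² / H` of the squared van der Corput bound is `≤ ε² / 12`
  obtain ⟨H, hH⟩ := exists_nat_gt (48 * C ^ 2 / ε ^ 2)
  have hHpos : (0 : ℝ) < H := lt_of_le_of_lt (by positivity) hH
  have hHC : 48 * C ^ 2 ≤ H * ε ^ 2 := by rw [div_lt_iff₀ (by positivity)] at hH; linarith
  obtain ⟨lcorr, hlcorr⟩ := exists_forall_lt_of_uwLim_zero hvdc H (by positivity : 0 < ε ^ 2 / 48)
  refine ⟨|lcorr| + D + 48 * H * D * C ^ 2 / ε ^ 2 + 8 * H * C * D / ε + 1,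
    fun M N hM hMN hlarge => ?_⟩
  have hthresholds : 0 ≤ |lcorr| ∧ 0 ≤ 48 * H * D * C ^ 2 / ε ^ 2 ∧ 0 ≤ 8 * H * C * D / ε :=
    ⟨abs_nonneg _, by positivity, by positivity⟩
  have hL : 0 < W N - W M := by linarith
  have hA : ∑ n ∈ Icc M N, dd W n ≤ 2 * (W N - W M) := by
    have : ∑ n ∈ Icc M N, dd W n = W (N + 1) - W M := sum_Icc_sub hMN W
    have hN : W (N + 1) - W N ≤ D := hanti N₀ N le_rfl (hM.trans hMN)
    linarith
  refine lt_mul_of_vdc_bound hHpos hL hε hC0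
    (sum_nonneg fun n hn => hw n (hM.trans (mem_Icc.1 hn).1)) hA (hw M hM)
    (hanti _ _ le_rfl hM) hHC ?_ ?_ <| norm_sum_Icc_smul_le_vdc hC (fun n hn => hw n (hM.trans hn))
    (fun n hn => hanti n (n + 1) (hM.trans hn) n.le_succ) hMN (mul_nonneg (by positivity) hL.le)
    fun d hd hdH => (hlcorr d hd hdH M N hMN (by linarith [le_abs_self lcorr])).le
  · rw [← div_le_iff₀ (by positivity)]; linarith
  · rw [← div_le_iff₀ hε]; linarith

theorem stmt9_general {H : Type*} [NormedAddCommGroup H] [InnerProductSpace ℂ H]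
    (W : ℕ → ℝ) (hW : MemF 1 W) (f : ℕ → H) (hbd : ∃ C : ℝ, ∀ n, ‖f n‖ ≤ C)
    (hvdc : ∀ d : ℕ, 1 ≤ d → UWLim W (fun n => (inner ℂ (f (n + d)) (f n) : ℂ)) 0) :
    UWLim W f 0 := by
  obtain ⟨C, hC⟩ := hbd
  obtain ⟨⟨N₀, hmono | hanti⟩, hlim, -⟩ : MemF 0 (dd W) := hW
  · have hnonpos : ∀ n, N₀ ≤ n → dd W n ≤ 0 := fun n hn =>
      ge_of_tendsto hlim (eventually_atTop.2 ⟨n, fun m hm => hmono n m hn hm⟩)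
    exact uwLim_of_bddAbove ⟨_, fun M N => sub_le_sum_range_abs_dd_of_nonpos hnonpos⟩ f 0
  · have hnonneg : ∀ n, N₀ ≤ n → 0 ≤ dd W n := fun n hn =>
      le_of_tendsto hlim (eventually_atTop.2 ⟨n, fun m hm => hanti n m hn hm⟩)
    exact uwLim_zero_of_forall_le hC fun ε hε =>
      exists_norm_sum_lt_of_vdc hC hnonneg hanti hvdc hε

/-- Van der Corput lemma for uniform Riesz means in a Hilbert space. -/
theorem stmt9 {H : Type*} [NormedAddCommGroup H] [InnerProductSpace ℂ H] [CompleteSpace H]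
    (W : ℕ → ℝ) (hW : MemF 1 W) (f : ℕ → H) (hbd : ∃ C : ℝ, ∀ n, ‖f n‖ ≤ C)
    (hvdc : ∀ d : ℕ, 1 ≤ d → UWLim W (fun n => (inner ℂ (f (n + d)) (f n) : ℂ)) 0) :
    UWLim W f 0 :=
  stmt9_general W hW f hbd hvdc
end
end

section
/- Let π : ℝ → 𝕋 := ℝ/ℤ be the canonical quotient map and let W ∈ F₁. Then the sequence n ↦ π(W(n)) is well distributed on 𝕋 (with respect to the normalized Haar measure on 𝕋) with respect to the uniform Riesz mean UW. -/
open Filter MeasureTheory Finset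
open scoped ENNReal Classical

noncomputable section

/-
Weyl's criterion for the weights `ΔW`. If `ΔW` is eventually nonpositive, `W N - W M` is bounded
above and the uniform mean holds vacuously. Otherwise `ΔW ≥ 0` eventually, so `Σ_{[M,N]} |ΔW|`
exceeds `W N - W M` by a bounded amount; hence the continuous `F` for which the uniform mean of
`F (π (W n))` is `∫ F` form a closed subspace of `C(𝕋, ℂ)`. It contains the constants, and for
`c = 2πik ≠ 0` the weighted sum of `exp (c W n)` telescopes:
`ΔW n • exp (c W n) = (exp (c W (n+1)) - exp (c W n)) / c + O(|c| ΔW(n)²)`,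
where `ΔW n → 0` makes the error `o(W N - W M)`. Trigonometric polynomials are dense in `C(𝕋, ℂ)`.
-/

open Topology

lemma sum_le_sum_range_add_sum {f g : ℕ → ℝ} {N₀ : ℕ} (hf : ∀ n, 0 ≤ f n) (hg : ∀ n, 0 ≤ g n)
    (hfg : ∀ n, N₀ ≤ n → f n ≤ g n) (s : Finset ℕ) :
    ∑ n ∈ s, f n ≤ ∑ n ∈ range N₀, f n + ∑ n ∈ s, g n := by
  rw [← sum_filter_add_sum_filter_not s (· < N₀)]
  gcongr ?_ + ?_
  · refine sum_le_sum_of_subset_of_nonneg (fun n hn => ?_) fun n _ _ => hf n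
    exact mem_range.2 (mem_filter.1 hn).2
  · calc ∑ n ∈ s with ¬n < N₀, f n ≤ ∑ n ∈ s with ¬n < N₀, g n :=
          sum_le_sum fun n hn => hfg n (not_lt.1 (mem_filter.1 hn).2)
      _ ≤ ∑ n ∈ s, g n := sum_le_sum_of_subset_of_nonneg (filter_subset _ _) fun n _ _ => hg n

lemma sum_Ico_dd (W : ℕ → ℝ) {M N : ℕ} (h : M ≤ N) : ∑ n ∈ Ico M N, dd W n = W N - W M :=
  Finset.sum_Ico_sub W h

lemma sum_Icc_dd (W : ℕ → ℝ) {M N : ℕ} (h : M ≤ N) :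
    ∑ n ∈ Icc M N, dd W n = W (N + 1) - W M :=
  Finset.sum_Icc_sub h W

section RieszMean

variable {W : ℕ → ℝ} {E F : Type*} [NormedAddCommGroup E] [NormedSpace ℝ E]
  [NormedAddCommGroup F] [NormedSpace ℝ F]

lemma UWLim.of_forall_norm_sub_le {a : ℕ → E} {L : E}
    (h : ∀ ε > 0, ∃ K : ℝ, ∀ M N : ℕ, M ≤ N → 0 ≤ W N - W M →
      ‖∑ n ∈ Icc M N, dd W n • a n - (W N - W M) • L‖ ≤ K + ε * (W N - W M)) :
    UWLim W a L := by
  intro ε hε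
  obtain ⟨K, hK⟩ := h (ε / 2) (half_pos hε)
  refine ⟨⌈2 * K / ε⌉₊ + 1, fun M N hMN hl => ?_⟩
  set r := W N - W M
  have hr : 0 < r := lt_of_lt_of_le (by positivity) hl
  have hKr : 2 * K / ε < r := lt_of_lt_of_le (by push_cast; linarith [Nat.le_ceil (2 * K / ε)]) hl
  rw [div_lt_iff₀ hε] at hKr
  calc ‖r⁻¹ • ∑ n ∈ Icc M N, dd W n • a n - L‖
      = r⁻¹ * ‖∑ n ∈ Icc M N, dd W n • a n - r • L‖ := by
        rw [← norm_smul_of_nonneg (inv_nonneg.2 hr.le), smul_sub, smul_smul,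
          inv_mul_cancel₀ hr.ne', one_smul]
    _ ≤ r⁻¹ * (K + ε / 2 * r) := by gcongr; exact hK M N hMN hr.le
    _ < ε := by rw [inv_mul_lt_iff₀ hr]; linarith

lemma UWLim.add {a b : ℕ → E} {L L' : E} (ha : UWLim W a L) (hb : UWLim W b L') :
    UWLim W (fun n => a n + b n) (L + L') := by
  intro ε hε
  obtain ⟨l₁, h₁⟩ := ha (ε / 2) (half_pos hε)
  obtain ⟨l₂, h₂⟩ := hb (ε / 2) (half_pos hε)
  refine ⟨max l₁ l₂, fun M N hMN hl => ?_⟩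
  have hl₁ : (l₁ : ℝ) ≤ W N - W M := le_trans (by exact_mod_cast le_max_left l₁ l₂) hl
  have hl₂ : (l₂ : ℝ) ≤ W N - W M := le_trans (by exact_mod_cast le_max_right l₁ l₂) hl
  calc ‖(W N - W M)⁻¹ • ∑ n ∈ Icc M N, dd W n • (a n + b n) - (L + L')‖
      = ‖((W N - W M)⁻¹ • ∑ n ∈ Icc M N, dd W n • a n - L)
          + ((W N - W M)⁻¹ • ∑ n ∈ Icc M N, dd W n • b n - L')‖ := by
        simp only [smul_add, sum_add_distrib]
        abel_nf
    _ ≤ _ := norm_add_le _ _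
    _ < ε / 2 + ε / 2 := add_lt_add (h₁ M N hMN hl₁) (h₂ M N hMN hl₂)
    _ = ε := add_halves ε

lemma UWLim.map {a : ℕ → E} {L : E} (T : E →L[ℝ] F) (ha : UWLim W a L) :
    UWLim W (fun n => T (a n)) (T L) := by
  intro ε hε
  have hT : 0 < ‖T‖ + 1 := by positivity
  obtain ⟨l, hl⟩ := ha (ε / (‖T‖ + 1)) (by positivity)
  refine ⟨l, fun M N hMN hlMN => ?_⟩
  calc ‖(W N - W M)⁻¹ • ∑ n ∈ Icc M N, dd W n • T (a n) - T L‖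
      = ‖T ((W N - W M)⁻¹ • ∑ n ∈ Icc M N, dd W n • a n - L)‖ := by
        simp only [map_sub, map_smul, map_sum]
    _ ≤ ‖T‖ * ‖(W N - W M)⁻¹ • ∑ n ∈ Icc M N, dd W n • a n - L‖ := T.le_opNorm _
    _ ≤ (‖T‖ + 1) * ‖(W N - W M)⁻¹ • ∑ n ∈ Icc M N, dd W n • a n - L‖ := by
        gcongr; linarith
    _ < (‖T‖ + 1) * (ε / (‖T‖ + 1)) := by gcongr; exact hl M N hMN hlMN
    _ = ε := mul_div_cancel₀ ε hT.ne'

def AlmostMonotone (W : ℕ → ℝ) (B : ℝ) : Prop :=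
  ∀ M N : ℕ, M ≤ N → ∑ n ∈ Icc M N, |dd W n| ≤ W N - W M + B

lemma UWLim.of_forall_approx {B : ℝ} (hV : AlmostMonotone W B) {a : ℕ → E} {L : E}
    (h : ∀ ε > 0, ∃ b : ℕ → E, ∃ L' : E, (∀ n, ‖a n - b n‖ ≤ ε) ∧ ‖L - L'‖ ≤ ε ∧ UWLim W b L') :
    UWLim W a L := by
  intro ε hε
  obtain ⟨b, L', hab, hL, hb⟩ := h (ε / 4) (by positivity)
  obtain ⟨l, hl⟩ := hb (ε / 4) (by positivity)
  refine ⟨max l (⌈B⌉₊ + 1), fun M N hMN hlMN => ?_⟩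
  set r := W N - W M
  have hBr : ((⌈B⌉₊ + 1 : ℕ) : ℝ) ≤ r := le_trans (by exact_mod_cast le_max_right _ _) hlMN
  push_cast at hBr
  have hr : 0 < r := by linarith [(⌈B⌉₊).cast_nonneg (α := ℝ)]
  have hdiff : ‖∑ n ∈ Icc M N, dd W n • a n - ∑ n ∈ Icc M N, dd W n • b n‖ ≤ (r + B) * (ε / 4) :=
    calc ‖∑ n ∈ Icc M N, dd W n • a n - ∑ n ∈ Icc M N, dd W n • b n‖
        = ‖∑ n ∈ Icc M N, dd W n • (a n - b n)‖ := by simp only [smul_sub, sum_sub_distrib]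
      _ ≤ ∑ n ∈ Icc M N, |dd W n| * (ε / 4) := by
          refine (norm_sum_le _ _).trans (sum_le_sum fun n _ => ?_)
          rw [norm_smul, Real.norm_eq_abs]
          gcongr
          exact hab n
      _ ≤ (r + B) * (ε / 4) := by
          rw [← sum_mul]
          gcongr
          exact hV M N hMN
  calc ‖r⁻¹ • ∑ n ∈ Icc M N, dd W n • a n - L‖
      = ‖r⁻¹ • (∑ n ∈ Icc M N, dd W n • a n - ∑ n ∈ Icc M N, dd W n • b n)
          + (r⁻¹ • ∑ n ∈ Icc M N, dd W n • b n - L') + (L' - L)‖ := by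
        rw [smul_sub]
        abel_nf
    _ ≤ r⁻¹ * ‖∑ n ∈ Icc M N, dd W n • a n - ∑ n ∈ Icc M N, dd W n • b n‖
          + ‖r⁻¹ • ∑ n ∈ Icc M N, dd W n • b n - L'‖ + ‖L' - L‖ := by
        rw [← norm_smul_of_nonneg (inv_nonneg.2 hr.le)]
        exact norm_add₃_le
    _ < ε := by
        have h₁ : r⁻¹ * ((r + B) * (ε / 4)) ≤ ε / 2 := by
          rw [inv_mul_le_iff₀ hr]
          nlinarith [Nat.le_ceil B]
        have h₂ := hl M N hMN (le_trans (by exact_mod_cast le_max_left _ _) hlMN)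
        have h₃ : ‖L' - L‖ ≤ ε / 4 := by rwa [norm_sub_rev]
        linarith [mul_le_mul_of_nonneg_left hdiff (inv_nonneg.2 hr.le)]

end RieszMean

lemma exists_almostMonotone_of_eventually_nonneg {W : ℕ → ℝ} {N₀ : ℕ} {C : ℝ}
    (hw : ∀ n, N₀ ≤ n → 0 ≤ dd W n) (hC : ∀ n, |dd W n| ≤ C) : ∃ B, AlmostMonotone W B := by
  refine ⟨C + ∑ n ∈ range N₀, (|dd W n| - dd W n), fun M N hMN => ?_⟩
  have h := sum_le_sum_range_add_sum (N₀ := N₀) (g := 0)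
    (fun n => sub_nonneg.2 (le_abs_self (dd W n))) (fun _ => le_rfl)
    (fun n hn => by simp [abs_of_nonneg (hw n hn)]) (Icc M N)
  simp only [sum_sub_distrib, sum_Icc_dd W hMN, Pi.zero_apply, sum_const_zero, add_zero] at h
  have hN : W (N + 1) = W N + dd W N := by simp [dd]
  rw [sum_sub_distrib]
  linarith [le_of_abs_le (hC N)]

lemma AlmostMonotone.abs_dd_le {W : ℕ → ℝ} {B : ℝ} (hV : AlmostMonotone W B) (n : ℕ) :
    |dd W n| ≤ B := by
  simpa using hV n n le_rfl

lemma uwLim_of_eventually_nonpos {W : ℕ → ℝ} {N₀ : ℕ} (hw : ∀ n, N₀ ≤ n → dd W n ≤ 0)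
    {E : Type*} [NormedAddCommGroup E] [NormedSpace ℝ E] (a : ℕ → E) (L : E) : UWLim W a L := by
  set B := ∑ n ∈ range N₀, max (dd W n) 0
  intro ε hε
  refine ⟨⌈B⌉₊ + 1, fun M N hMN hl => absurd hl (not_le.2 ?_)⟩
  calc W N - W M = ∑ n ∈ Ico M N, dd W n := (sum_Ico_dd W hMN).symm
    _ ≤ ∑ n ∈ Ico M N, max (dd W n) 0 := sum_le_sum fun n _ => le_max_left _ _
    _ ≤ B + ∑ n ∈ Ico M N, (0 : ℝ) :=
        sum_le_sum_range_add_sum (fun n => le_max_right _ _) (fun _ => le_rfl)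
          (fun n hn => (max_eq_right (hw n hn)).le) _
    _ < ((⌈B⌉₊ + 1 : ℕ) : ℝ) := by rw [sum_const_zero]; push_cast; linarith [Nat.le_ceil B]

lemma uwLim_const {W : ℕ → ℝ} {B : ℝ} (hV : AlmostMonotone W B)
    {E : Type*} [NormedAddCommGroup E] [NormedSpace ℝ E] (L : E) : UWLim W (fun _ => L) L := by
  refine UWLim.of_forall_norm_sub_le fun ε hε => ⟨B * ‖L‖, fun M N hMN hr => ?_⟩
  have hN : W (N + 1) = W N + dd W N := by simp [dd]
  calc ‖∑ n ∈ Icc M N, dd W n • L - (W N - W M) • L‖ = |dd W N| * ‖L‖ := by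
        rw [← sum_smul, sum_Icc_dd W hMN, hN, ← sub_smul, norm_smul, Real.norm_eq_abs]
        ring_nf
    _ ≤ B * ‖L‖ := by gcongr; exact hV.abs_dd_le N
    _ ≤ B * ‖L‖ + ε * (W N - W M) := le_add_of_nonneg_right (by positivity)

lemma norm_dd_smul_exp_sub_le (W : ℕ → ℝ) (n : ℕ) {c : ℂ} (hc : c ≠ 0) (hre : c.re = 0)
    (h : ‖c‖ * |dd W n| ≤ 1) :
    ‖dd W n • Complex.exp (c * W n) - (Complex.exp (c * W (n + 1)) - Complex.exp (c * W n)) / c‖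
      ≤ ‖c‖ * dd W n ^ 2 := by
  set z := c * dd W n
  have hz : ‖z‖ = ‖c‖ * |dd W n| := by rw [norm_mul, Complex.norm_real, Real.norm_eq_abs]
  have hexp : Complex.exp (c * W (n + 1)) = Complex.exp (c * W n) * Complex.exp z := by
    rw [← Complex.exp_add]; simp only [z, dd]; push_cast; ring_nf
  have hunit : ‖Complex.exp (c * W n)‖ = 1 := by simp [Complex.norm_exp, hre]
  calc ‖dd W n • Complex.exp (c * W n)
          - (Complex.exp (c * W (n + 1)) - Complex.exp (c * W n)) / c‖
      = ‖-(Complex.exp (c * W n) * ((Complex.exp z - 1 - z) / c))‖ := by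
        rw [hexp, Complex.real_smul]
        congr 1
        field_simp
        ring
    _ = ‖Complex.exp z - 1 - z‖ / ‖c‖ := by rw [norm_neg, norm_mul, hunit, one_mul, norm_div]
    _ ≤ ‖z‖ ^ 2 / ‖c‖ := by gcongr; exact Complex.norm_exp_sub_one_sub_id_le (hz ▸ h)
    _ = ‖c‖ * dd W n ^ 2 := by
        rw [hz, mul_pow, sq_abs]
        field_simp [norm_ne_zero_iff.2 hc]

theorem uwLim_exp_mul {W : ℕ → ℝ} {B : ℝ} (hw : Tendsto (dd W) atTop (𝓝 0))
    (hV : AlmostMonotone W B) {c : ℂ} (hc : c ≠ 0) (hre : c.re = 0) :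
    UWLim W (fun n => Complex.exp (c * W n)) 0 := by
  set φ : ℕ → ℂ := fun n => Complex.exp (c * W n)
  have hφ : ∀ n, ‖φ n‖ = 1 := fun n => by simp [φ, Complex.norm_exp, hre]
  set e : ℕ → ℂ := fun n => dd W n • φ n - (φ (n + 1) - φ n) / c
  have hc₀ : 0 < ‖c‖ := norm_pos_iff.2 hc
  refine UWLim.of_forall_norm_sub_le fun ε hε => ?_
  obtain ⟨N₁, hN₁⟩ : ∃ N₁, ∀ n ≥ N₁, |dd W n| < min ε 1 / ‖c‖ :=
    eventually_atTop.1 (hw.abs.eventually_lt_const (by rw [abs_zero]; positivity))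
  have he : ∀ n, N₁ ≤ n → ‖e n‖ ≤ ε * |dd W n| := fun n hn => by
    have hsmall : ‖c‖ * |dd W n| ≤ min ε 1 := by
      have := hN₁ n hn
      rw [lt_div_iff₀ hc₀] at this
      linarith
    calc ‖e n‖ ≤ ‖c‖ * dd W n ^ 2 :=
          norm_dd_smul_exp_sub_le W n hc hre (hsmall.trans (min_le_right _ _))
      _ = (‖c‖ * |dd W n|) * |dd W n| := by rw [mul_assoc, ← sq, sq_abs]
      _ ≤ ε * |dd W n| := by gcongr; exact hsmall.trans (min_le_left _ _)
  refine ⟨2 / ‖c‖ + ∑ n ∈ range N₁, ‖e n‖ + ε * B, fun M N hMN _ => ?_⟩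
  have hsplit : ∑ n ∈ Icc M N, dd W n • φ n = (φ (N + 1) - φ M) / c + ∑ n ∈ Icc M N, e n := by
    simp only [e, sum_sub_distrib, ← sum_div, sum_Icc_sub hMN φ]
    ring
  have hboundary : ‖(φ (N + 1) - φ M) / c‖ ≤ 2 / ‖c‖ := by
    rw [norm_div]
    gcongr
    linarith [norm_sub_le (φ (N + 1)) (φ M), hφ (N + 1), hφ M]
  calc ‖∑ n ∈ Icc M N, dd W n • φ n - (W N - W M) • (0 : ℂ)‖
      ≤ ‖(φ (N + 1) - φ M) / c‖ + ∑ n ∈ Icc M N, ‖e n‖ := by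
        rw [smul_zero, sub_zero, hsplit]
        exact (norm_add_le _ _).trans (add_le_add_right (norm_sum_le _ _) _)
    _ ≤ 2 / ‖c‖ + (∑ n ∈ range N₁, ‖e n‖ + ∑ n ∈ Icc M N, ε * |dd W n|) := by
        gcongr
        exact sum_le_sum_range_add_sum (fun n => norm_nonneg _) (fun n => by positivity) he _
    _ ≤ 2 / ‖c‖ + ∑ n ∈ range N₁, ‖e n‖ + ε * B + ε * (W N - W M) := by
        rw [← mul_sum]
        nlinarith [hV M N hMN]

lemma integral_fourier_unitAddCircle (k : ℤ) :
    ∫ t : UnitAddCircle, fourier k t = if k = 0 then 1 else 0 := by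
  have h := congrFun (fourierCoeff_fourier (T := 1) k) 0
  simp only [fourierCoeff, neg_zero, fourier_zero, one_smul, AddCircle.integral_haarAddCircle,
    inv_one, Pi.single_apply] at h
  simpa [eq_comm] using h

theorem uwLim_fourier {W : ℕ → ℝ} {B : ℝ} (hw : Tendsto (dd W) atTop (𝓝 0))
    (hV : AlmostMonotone W B) (k : ℤ) :
    UWLim W (fun n => fourier k (W n : UnitAddCircle)) (∫ t : UnitAddCircle, fourier k t) := by
  rw [integral_fourier_unitAddCircle]
  split_ifs with hk
  · simpa [hk, fourier_zero] using uwLim_const hV (1 : ℂ)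
  · have hc : 2 * (Real.pi : ℂ) * Complex.I * k ≠ 0 := by simp [hk, Real.pi_ne_zero]
    simpa [fourier_coe_apply] using uwLim_exp_mul hw hV hc (by simp)

section UWLimSubmodule

variable {G : Type*} [TopologicalSpace G] [CompactSpace G] [MeasurableSpace G]
  [OpensMeasurableSpace G]

lemma integrable_continuousMap (F : C(G, ℂ)) (μ : Measure G) [IsFiniteMeasure μ] :
    Integrable F μ :=
  (BoundedContinuousFunction.mkOfCompact F).integrable μ

def uwLimSubmodule (W : ℕ → ℝ) (x : ℕ → G) (μ : Measure G) [IsFiniteMeasure μ] :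
    Submodule ℂ C(G, ℂ) where
  carrier := {F | UWLim W (fun n => F (x n)) (∫ g, F g ∂μ)}
  add_mem' {F₁ F₂} h₁ h₂ := by
    have h := h₁.add h₂
    rwa [← integral_add (integrable_continuousMap F₁ μ) (integrable_continuousMap F₂ μ)] at h
  zero_mem' _ hε := ⟨0, fun _ _ _ _ => by simpa using hε⟩
  smul_mem' c F h := by
    have h' := h.map (ContinuousLinearMap.mul ℝ ℂ c)
    simp only [ContinuousLinearMap.mul_apply', ← integral_const_mul] at h'
    exact h'

lemma isClosed_uwLimSubmodule {W : ℕ → ℝ} {B : ℝ} (hV : AlmostMonotone W B)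
    (x : ℕ → G) (μ : Measure G) [IsFiniteMeasure μ] :
    IsClosed (uwLimSubmodule W x μ : Set C(G, ℂ)) := by
  refine isClosed_of_closure_subset fun F hF => UWLim.of_forall_approx hV fun ε hε => ?_
  have hμ : 0 < μ.real Set.univ + 1 := by positivity
  obtain ⟨g, hg, hFg⟩ := Metric.mem_closure_iff.1 hF (ε / (μ.real Set.univ + 1)) (by positivity)
  have hpt : ∀ t, ‖F t - g t‖ ≤ ε / (μ.real Set.univ + 1) := fun t =>
    ((F - g).norm_coe_le_norm t).trans ((dist_eq_norm F g).symm.trans_le hFg.le)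
  have hε' : ε / (μ.real Set.univ + 1) ≤ ε :=
    div_le_self hε.le (by linarith [measureReal_nonneg (μ := μ) (s := Set.univ)])
  refine ⟨fun n => g (x n), ∫ t, g t ∂μ, fun n => (hpt (x n)).trans hε', ?_, hg⟩
  rw [← integral_sub (integrable_continuousMap F μ) (integrable_continuousMap g μ)]
  calc ‖∫ t, (F t - g t) ∂μ‖ ≤ ε / (μ.real Set.univ + 1) * μ.real Set.univ :=
        norm_integral_le_of_norm_le_const (Eventually.of_forall hpt)
    _ ≤ ε := by
        rw [div_mul_eq_mul_div, div_le_iff₀ hμ]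
        linarith

end UWLimSubmodule

theorem wellDistributed_of_tendsto_of_almostMonotone {W : ℕ → ℝ} {B : ℝ}
    (hw : Tendsto (dd W) atTop (𝓝 0)) (hV : AlmostMonotone W B) :
    WellDistributed W (fun n => (W n : UnitAddCircle)) volume := by
  intro F
  have hle : (Submodule.span ℂ (Set.range (fourier (T := 1)))).topologicalClosure
      ≤ uwLimSubmodule W (fun n => (W n : UnitAddCircle)) volume :=
    Submodule.topologicalClosure_minimal _
      (Submodule.span_le.2 (Set.range_subset_iff.2 (uwLim_fourier hw hV)))
      (isClosed_uwLimSubmodule hV _ _)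
  rw [span_fourier_closure_eq_top] at hle
  exact hle (Submodule.mem_top (x := F))

/-- For `W ∈ F₁`, the sequence `π(W(n))` is well distributed on `𝕋 = ℝ/ℤ` with respect to
the uniform Riesz mean along `W` (the normalized Haar measure on `𝕋` is `volume`). -/
theorem stmt11 (W : ℕ → ℝ) (hW : MemF 1 W) :
    WellDistributed W (fun n => ((W n : ℝ) : UnitAddCircle)) (volume : Measure UnitAddCircle) := by
  obtain ⟨⟨N₀, hmono | hanti⟩, hw, -⟩ : MemF 0 (dd W) := hW
  · have hnonpos : ∀ n, N₀ ≤ n → dd W n ≤ 0 := fun n hn =>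
      ge_of_tendsto hw (eventually_atTop.2 ⟨n, fun m hm => hmono n m hn hm⟩)
    exact fun F => uwLim_of_eventually_nonpos hnonpos _ _
  · have hnonneg : ∀ n, N₀ ≤ n → 0 ≤ dd W n := fun n hn =>
      le_of_tendsto hw (eventually_atTop.2 ⟨n, fun m hm => hanti n m hn hm⟩)
    obtain ⟨C, hC⟩ := isBounded_iff_forall_norm_le.1 (Metric.isBounded_range_of_tendsto _ hw)
    obtain ⟨B, hV⟩ :=
      exists_almostMonotone_of_eventually_nonneg hnonneg fun n => hC _ (Set.mem_range_self n)
    exact wellDistributed_of_tendsto_of_almostMonotone hw hV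
end
end

section
/- Let ℓ ≥ 0 be an integer, let (X,B,μ,T) be an invertible measure preserving system with Koopman operator U on L²(X,B,μ), and let h ∈ L²(X,B,μ) be a weakly mixing function with ‖h‖₂ ≤ 1. Then for every ε > 0, every h' ∈ L²(X,B,μ) with ‖h'‖₂ ≤ 1 and every sufficiently large N ∈ ℕ, there exists a set D ⊆ ℕ with lower Banach density d_*(D) = 1 such that for every polynomial p ∈ ℤ[x] of degree ℓ whose ℓ-th iterated finite difference Δ^ℓ p (which is a constant integer) lies in D, one has (1/N) Σ_{n=1}^{N} |⟨U^{p(n)} h, h'⟩| ≤ ε. -/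
/-!
Write `u k` for the `L²` class of `h ∘ T^k`. It is a stationary sequence of vectors of norm at
most one, and weak mixing says that the correlations `‖⟪w, u n⟫‖` have uniformly vanishing
Cesàro means. We induct on `L` for arbitrary `q : ℤ → ℤ` with constant `L`-th difference `d`.
For `L = 0`, `q ≡ d` and the exceptional `d` are those with a large correlation, a set of Banach
density zero by Markov's inequality. For the step, van der Corput's inequality bounds
`(∑ₙ ‖⟪w, u (q n)⟫‖)²` by `N + 2 ∑ᵣ ∑ₙ ‖⟪u 0, u (q (n + r) - q n)⟫‖`, and `y ↦ q (y + r) - q y`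
has constant `L`-th difference `r * d`. The induction hypothesis for `u 0` handles every `r` with
`r * d` outside an exceptional set `S'`, and the `d` for which many `r * d` lie in `S'` form again
a set of density zero, since multiplication by `r` maps windows to windows.
-/

open Filter MeasureTheory Finset
open scoped ENNReal Classical

noncomputable section

/-- Finite difference operator for functions on `ℤ` (used for integer polynomials). -/
def fdiff (q : ℤ → ℤ) : ℤ → ℤ := fun n => q (n + 1) - q n

open scoped Nat InnerProductSpace

lemma fdiff_eq_fwdDiff : fdiff = fwdDiff 1 := rfl

lemma Polynomial.fwdDiff_iter_natDegree_eval_apply {R : Type*} [CommRing R] (p : Polynomial R)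
    (x : R) : (fwdDiff 1)^[p.natDegree] p.eval x = p.leadingCoeff * p.natDegree ! := by
  simp [p.fwdDiff_iter_degree_eq_factorial]

lemma fwdDiff_iter_sub_comp_add {q : ℤ → ℤ} {L : ℕ} {d : ℤ}
    (hq : ∀ x, (fwdDiff 1)^[L + 1] q x = d) (r : ℕ) (x : ℤ) :
    (fwdDiff 1)^[L] (fun y => q (y + r) - q y) x = r * d := by
  have hsub : (fwdDiff 1)^[L] (fun y => q (y + r) - q y) x
      = (fwdDiff 1)^[L] q (x + r) - (fwdDiff 1)^[L] q x := by
    simp only [fwdDiff_iter_eq_sum_shift, smul_sub, sum_sub_distrib, add_right_comm]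
  rw [hsub]
  clear hsub
  induction r with
  | zero => simp
  | succ r ih =>
    have hstep := hq (x + r)
    rw [Function.iterate_succ_apply', fwdDiff] at hstep
    push_cast
    rw [← add_assoc]
    linarith

lemma card_filter_lt_mul_le_sum {ι : Type*} (s : Finset ι) {f : ι → ℝ}
    (hf : ∀ i ∈ s, 0 ≤ f i) (c : ℝ) : #{i ∈ s | c < f i} * c ≤ ∑ i ∈ s, f i :=
  calc #{i ∈ s | c < f i} * c = #{i ∈ s | c < f i} • c := (nsmul_eq_mul _ _).symm
    _ ≤ ∑ i ∈ s with c < f i, f i := card_nsmul_le_sum _ _ _ fun _ hi => (mem_filter.mp hi).2.le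
    _ ≤ ∑ i ∈ s, f i := sum_le_sum_of_subset_of_nonneg (filter_subset _ _) fun i hi _ => hf i hi

lemma sum_le_card_mul_add_card_filter_mul {ι : Type*} (s : Finset ι) (P : ι → Prop)
    [DecidablePred P] {f : ι → ℝ} {b B : ℝ} (hb : 0 ≤ b) (hgood : ∀ i ∈ s, ¬P i → f i ≤ b)
    (hall : ∀ i ∈ s, f i ≤ B) : ∑ i ∈ s, f i ≤ #s * b + #{i ∈ s | P i} * B := by
  rw [← sum_filter_add_sum_filter_not s P, add_comm]
  gcongr
  · calc ∑ i ∈ s with ¬P i, f i ≤ #{i ∈ s | ¬P i} * b :=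
          sum_le_card_nsmul _ _ _ (fun i hi => hgood i (mem_filter.mp hi).1 (mem_filter.mp hi).2)
            |>.trans_eq (nsmul_eq_mul _ _)
      _ ≤ #s * b := by gcongr; exact filter_subset _ _
  · exact (sum_le_card_nsmul _ _ _ fun i hi => hall i (mem_filter.mp hi).1).trans_eq
      (nsmul_eq_mul _ _)

lemma sum_sum_le_card_add_two_mul_sum_sum_shift (N : ℕ) {K : ℕ → ℕ → ℝ}
    (hsymm : ∀ n m, K n m = K m n) (hdiag : ∀ n, K n n ≤ 1) (hK : ∀ n m, 0 ≤ K n m) :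
    ∑ n ∈ Icc 1 N, ∑ m ∈ Icc 1 N, K n m ≤ N + 2 * ∑ r ∈ Icc 1 N, ∑ n ∈ Icc 1 N, K n (n + r) := by
  have hpoint : ∀ n m, K n m ≤ (if n = m then 1 else 0) + (if n < m then K n m else 0)
      + (if m < n then K m n else 0) := by
    intro n m
    rcases lt_trichotomy n m with h | rfl | h
    · simp [h, h.ne, h.not_gt]
    · simp [hdiag]
    · simp [h, h.ne', h.not_gt, hsymm n m]
  have hupper : ∀ n, ∑ m ∈ Icc 1 N, (if n < m then K n m else 0) ≤ ∑ r ∈ Icc 1 N, K n (n + r) := by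
    intro n
    rw [← sum_filter, ← sum_image (fun _ _ _ _ => Nat.add_left_cancel)]
    refine sum_le_sum_of_subset_of_nonneg (fun m hm => ?_) fun _ _ _ => hK _ _
    simp only [mem_filter, mem_Icc, mem_image] at hm ⊢
    exact ⟨m - n, by omega, by omega⟩
  calc ∑ n ∈ Icc 1 N, ∑ m ∈ Icc 1 N, K n m
      ≤ ∑ n ∈ Icc 1 N, ∑ m ∈ Icc 1 N, ((if n = m then 1 else 0) + (if n < m then K n m else 0)
          + (if m < n then K m n else 0)) := by gcongr with n _ m _; exact hpoint n m
    _ = N + 2 * ∑ n ∈ Icc 1 N, ∑ m ∈ Icc 1 N, (if n < m then K n m else 0) := by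
        have hdiagsum : ∑ n ∈ Icc 1 N, ∑ m ∈ Icc 1 N, (if n = m then (1 : ℝ) else 0) = N := by
          simp only [sum_ite_eq, sum_ite_mem, inter_self, sum_const, Nat.card_Icc, nsmul_one]
          push_cast; ring
        simp only [sum_add_distrib, hdiagsum]
        rw [sum_comm (f := fun n m => if m < n then K m n else 0)]
        ring
    _ ≤ N + 2 * ∑ n ∈ Icc 1 N, ∑ r ∈ Icc 1 N, K n (n + r) := by
        gcongr (N : ℝ) + 2 * ?_
        exact sum_le_sum fun n _ => hupper n
    _ = N + 2 * ∑ r ∈ Icc 1 N, ∑ n ∈ Icc 1 N, K n (n + r) := by rw [sum_comm]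

def HasUpperBanachDensityZero (S : Set ℕ) : Prop :=
  ∀ δ : ℝ, 0 < δ → ∃ N₁ : ℕ, ∀ N ≥ N₁, ∀ M : ℕ, (#{n ∈ Icc M (M + N) | n ∈ S} : ℝ) ≤ δ * N

def UniformlyCesaroNull (a : ℕ → ℝ) : Prop :=
  ∀ ε : ℝ, 0 < ε → ∃ L : ℕ, ∀ M N : ℕ, M + L ≤ N →
    (1 / (N - M : ℝ)) * ∑ n ∈ Ico M N, a n < ε

theorem UniformlyCesaroNull.hasUpperBanachDensityZero_setOf_lt {a : ℕ → ℝ}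
    (ha : UniformlyCesaroNull a) (ha0 : ∀ n, 0 ≤ a n) {e : ℝ} (he : 0 < e) :
    HasUpperBanachDensityZero {n | e < a n} := by
  intro δ hδ
  obtain ⟨L, hL⟩ := ha (e * δ / 2) (by positivity)
  refine ⟨max L 1, fun N hN M => ?_⟩
  have hN1 : (1 : ℝ) ≤ N := by exact_mod_cast le_of_max_le_right hN
  have hmean := hL M (M + N + 1) (by omega)
  rw [Ico_add_one_right_eq_Icc, show ((M + N + 1 : ℕ) : ℝ) - M = N + 1 by push_cast; ring,
    one_div_mul_eq_div, div_lt_iff₀ (by positivity)] at hmean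
  have hmarkov := card_filter_lt_mul_le_sum (Icc M (M + N)) (fun n _ => ha0 n) e
  have hcard : (#{n ∈ Icc M (M + N) | e < a n} : ℝ) * e ≤ δ * N * e := by
    nlinarith [mul_nonneg (mul_pos he hδ).le (sub_nonneg.mpr hN1)]
  exact le_of_mul_le_mul_right hcard he

theorem HasUpperBanachDensityZero.setOf_lt_card_filter_mul_mem {S : Set ℕ}
    (hS : HasUpperBanachDensityZero S) {c : ℝ} (hc : 0 < c) {N : ℕ} (hN : 0 < N) :
    HasUpperBanachDensityZero {d | c * N < #{r ∈ Icc 1 N | d * r ∈ S}} := by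
  intro δ hδ
  obtain ⟨N₁, hN₁⟩ := hS (δ * c / N) (by positivity)
  refine ⟨N₁, fun N' hN' M => ?_⟩
  have hcolumn : ∀ r ∈ Icc 1 N,
      (#{d ∈ Icc M (M + N') | d * r ∈ S} : ℝ) ≤ δ * c / N * (N' * N) := by
    intro r hr
    obtain ⟨hr1, hrN⟩ := mem_Icc.mp hr
    have hinj :
        #{d ∈ Icc M (M + N') | d * r ∈ S} ≤ #{k ∈ Icc (M * r) (M * r + N' * r) | k ∈ S} := by
      refine card_le_card_of_injOn (· * r) (fun d hd => ?_) fun a _ b _ hab =>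
        Nat.eq_of_mul_eq_mul_right hr1 hab
      simp only [coe_filter, mem_Icc, Set.mem_ofPred_eq] at hd ⊢
      exact ⟨⟨Nat.mul_le_mul_right r hd.1.1, by nlinarith [hd.1.2]⟩, hd.2⟩
    calc (#{d ∈ Icc M (M + N') | d * r ∈ S} : ℝ)
        ≤ #{k ∈ Icc (M * r) (M * r + N' * r) | k ∈ S} := by exact_mod_cast hinj
      _ ≤ δ * c / N * (N' * r : ℕ) := hN₁ _ (hN'.trans (Nat.le_mul_of_pos_right N' hr1)) _
      _ ≤ δ * c / N * (N' * N) := by push_cast; gcongr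
  have hmarkov := card_filter_lt_mul_le_sum (Icc M (M + N'))
    (f := fun d => (#{r ∈ Icc 1 N | d * r ∈ S} : ℝ)) (fun _ _ => Nat.cast_nonneg _) (c * N)
  have hswap : ∑ d ∈ Icc M (M + N'), (#{r ∈ Icc 1 N | d * r ∈ S} : ℝ)
      = ∑ r ∈ Icc 1 N, (#{d ∈ Icc M (M + N') | d * r ∈ S} : ℝ) := by
    simp only [card_filter]
    push_cast
    exact sum_comm
  have hbound :
      (#{d ∈ Icc M (M + N') | d ∈ {d | c * N < #{r ∈ Icc 1 N | d * r ∈ S}}} : ℝ) * (c * N)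
        ≤ δ * N' * (c * N) := by
    calc _ ≤ ∑ d ∈ Icc M (M + N'), (#{r ∈ Icc 1 N | d * r ∈ S} : ℝ) := by
          simpa only [Set.mem_ofPred_eq] using hmarkov
      _ ≤ ∑ r ∈ Icc 1 N, δ * c / N * (N' * N) := hswap ▸ sum_le_sum hcolumn
      _ = δ * N' * (c * N) := by
          rw [sum_const, Nat.card_Icc, Nat.add_sub_cancel, nsmul_eq_mul]; field_simp
  exact le_of_mul_le_mul_right hbound (by positivity)

theorem HasUpperBanachDensityZero.compl_lowerBanachDensity_one {S : Set ℕ}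
    (hS : HasUpperBanachDensityZero S) (δ : ℝ) (hδ : 0 < δ) : ∃ N₁ : ℕ, ∀ N : ℕ, N₁ ≤ N →
      ∀ M : ℕ, (1 - δ) * (N : ℝ) ≤ ∑ n ∈ Icc M (M + N), Set.indicator Sᶜ (fun _ => (1 : ℝ)) n := by
  obtain ⟨N₁, hN₁⟩ := hS δ hδ
  refine ⟨N₁, fun N hN M => ?_⟩
  have hsplit : #{n ∈ Icc M (M + N) | n ∈ S} + #{n ∈ Icc M (M + N) | n ∉ S} = N + 1 := by
    rw [card_filter_add_card_filter_not, Nat.card_Icc]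
    omega
  have hsplit' : (#{n ∈ Icc M (M + N) | n ∈ S} : ℝ) + #{n ∈ Icc M (M + N) | n ∉ S} = N + 1 := by
    exact_mod_cast hsplit
  simp only [Set.indicator_apply, Set.mem_compl_iff, sum_boole]
  nlinarith [hN₁ N hN M]

section InnerProduct

variable {𝕜 E : Type*} [RCLike 𝕜] [NormedAddCommGroup E] [InnerProductSpace 𝕜 E]

lemma norm_sum_smul_sq_le_s17 {ι : Type*} (s : Finset ι) (v : ι → E) {θ : ι → 𝕜}
    (hθ : ∀ i, ‖θ i‖ ≤ 1) : ‖∑ i ∈ s, θ i • v i‖ ^ 2 ≤ ∑ i ∈ s, ∑ j ∈ s, ‖⟪v i, v j⟫_𝕜‖ := by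
  rw [← inner_self_eq_norm_sq (𝕜 := 𝕜), sum_inner]
  simp only [inner_sum, inner_smul_left, inner_smul_right]
  refine (RCLike.re_le_norm _).trans <| (norm_sum_le _ _).trans <| sum_le_sum fun i _ =>
    (norm_sum_le _ _).trans <| sum_le_sum fun j _ => ?_
  rw [norm_mul, norm_mul, RCLike.norm_conj, ← mul_assoc]
  exact mul_le_of_le_one_left (norm_nonneg _) (mul_le_one₀ (hθ j) (norm_nonneg _) (hθ i))

lemma sq_sum_norm_inner_le {ι : Type*} (s : Finset ι) (w : E) (v : ι → E) :
    (∑ i ∈ s, ‖⟪w, v i⟫_𝕜‖) ^ 2 ≤ ‖w‖ ^ 2 * ∑ i ∈ s, ∑ j ∈ s, ‖⟪v i, v j⟫_𝕜‖ := by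
  -- rotate each `v i` by the phase of `⟪w, v i⟫`
  set θ : ι → 𝕜 := fun i => (starRingEnd 𝕜) ⟪w, v i⟫_𝕜 / ‖⟪w, v i⟫_𝕜‖
  have hθ : ∀ i, ‖θ i‖ ≤ 1 := fun i => by
    simp only [θ, norm_div, RCLike.norm_conj, RCLike.norm_ofReal, abs_norm]
    exact div_self_le_one _
  have hphase : ∀ i, θ i * ⟪w, v i⟫_𝕜 = ‖⟪w, v i⟫_𝕜‖ := fun i => by
    rcases eq_or_ne ⟪w, v i⟫_𝕜 0 with h0 | h0
    · simp [h0]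
    · rw [div_mul_eq_mul_div, RCLike.conj_mul, sq, mul_div_assoc, div_self (by simpa using h0),
        mul_one]
  have hinner : ⟪w, ∑ i ∈ s, θ i • v i⟫_𝕜 = ((∑ i ∈ s, ‖⟪w, v i⟫_𝕜‖ : ℝ) : 𝕜) := by
    simp only [inner_sum, inner_smul_right, hphase, RCLike.ofReal_sum]
  have hS : ∑ i ∈ s, ‖⟪w, v i⟫_𝕜‖ ≤ ‖w‖ * ‖∑ i ∈ s, θ i • v i‖ := by
    calc ∑ i ∈ s, ‖⟪w, v i⟫_𝕜‖ = ‖⟪w, ∑ i ∈ s, θ i • v i⟫_𝕜‖ := by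
          rw [hinner, RCLike.norm_ofReal, abs_of_nonneg (sum_nonneg fun _ _ => norm_nonneg _)]
      _ ≤ _ := norm_inner_le_norm _ _
  calc (∑ i ∈ s, ‖⟪w, v i⟫_𝕜‖) ^ 2 ≤ (‖w‖ * ‖∑ i ∈ s, θ i • v i‖) ^ 2 := by
        gcongr
    _ = ‖w‖ ^ 2 * ‖∑ i ∈ s, θ i • v i‖ ^ 2 := mul_pow _ _ _
    _ ≤ _ := by gcongr; exact norm_sum_smul_sq_le_s17 s v hθ

end InnerProduct

section StationarySequence

variable {𝕜 E : Type*} [RCLike 𝕜] [NormedAddCommGroup E] [InnerProductSpace 𝕜 E] {u : ℤ → E}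

variable (𝕜) in
def AverageCorrelationSmall (u : ℤ → E) (L : ℕ) (w : E) (e : ℝ) : Prop :=
  ∃ N₀ : ℕ, ∀ N ≥ N₀, ∃ S : Set ℕ, HasUpperBanachDensityZero S ∧
    ∀ d ∉ S, ∀ q : ℤ → ℤ, (∀ x, (fwdDiff 1)^[L] q x = d) →
      ∑ n ∈ Icc 1 N, ‖⟪w, u (q n)⟫_𝕜‖ ≤ e * N

lemma sq_sum_norm_inner_le_vanDerCorput (hu : ∀ k, ‖u k‖ ≤ 1)
    (hstat : ∀ a b k, ⟪u (a + k), u (b + k)⟫_𝕜 = ⟪u a, u b⟫_𝕜) {w : E} (hw : ‖w‖ ≤ 1)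
    (q : ℤ → ℤ) (N : ℕ) :
    (∑ n ∈ Icc 1 N, ‖⟪w, u (q n)⟫_𝕜‖) ^ 2
      ≤ N + 2 * ∑ r ∈ Icc 1 N, ∑ n ∈ Icc 1 N, ‖⟪u 0, u (q (n + r) - q n)⟫_𝕜‖ := by
  have hcorr : ∀ a b, ⟪u a, u b⟫_𝕜 = ⟪u 0, u (b - a)⟫_𝕜 := fun a b => by
    rw [← hstat 0 (b - a) a, zero_add, sub_add_cancel]
  calc (∑ n ∈ Icc 1 N, ‖⟪w, u (q n)⟫_𝕜‖) ^ 2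
      ≤ ‖w‖ ^ 2 * ∑ n ∈ Icc 1 N, ∑ m ∈ Icc 1 N, ‖⟪u (q n), u (q m)⟫_𝕜‖ :=
        sq_sum_norm_inner_le _ _ _
    _ ≤ ∑ n ∈ Icc 1 N, ∑ m ∈ Icc 1 N, ‖⟪u (q n), u (q m)⟫_𝕜‖ :=
        mul_le_of_le_one_left (by positivity) (pow_le_one₀ (norm_nonneg _) hw)
    _ ≤ N + 2 * ∑ r ∈ Icc 1 N, ∑ n ∈ Icc 1 N, ‖⟪u (q n), u (q ↑(n + r))⟫_𝕜‖ :=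
        sum_sum_le_card_add_two_mul_sum_sum_shift N
          (fun n m => by rw [← inner_conj_symm, RCLike.norm_conj])
          (fun n => (norm_inner_le_norm _ _).trans (mul_le_one₀ (hu _) (norm_nonneg _) (hu _)))
          (fun _ _ => norm_nonneg _)
    _ = N + 2 * ∑ r ∈ Icc 1 N, ∑ n ∈ Icc 1 N, ‖⟪u 0, u (q (n + r) - q n)⟫_𝕜‖ := by
        refine congrArg _ (congrArg _ (sum_congr rfl fun r _ => sum_congr rfl fun n _ => ?_))
        rw [hcorr, Nat.cast_add]

lemma averageCorrelationSmall_zero {w : E}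
    (hwm : UniformlyCesaroNull fun n : ℕ => ‖⟪w, u n⟫_𝕜‖) {e : ℝ} (he : 0 < e) :
    AverageCorrelationSmall 𝕜 u 0 w e := by
  refine ⟨0, fun N _ => ⟨{d | e < ‖⟪w, u d⟫_𝕜‖},
    hwm.hasUpperBanachDensityZero_setOf_lt (fun _ => norm_nonneg _) he, fun d hd q hq => ?_⟩⟩
  calc ∑ n ∈ Icc 1 N, ‖⟪w, u (q n)⟫_𝕜‖ = ∑ n ∈ Icc 1 N, ‖⟪w, u d⟫_𝕜‖ := by
        simp only [show ∀ n : ℕ, q n = d from fun n => hq n]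
    _ ≤ ∑ n ∈ Icc 1 N, e := sum_le_sum fun _ _ => not_lt.mp hd
    _ = e * N := by simp [mul_comm]

lemma AverageCorrelationSmall.succ (hu : ∀ k, ‖u k‖ ≤ 1)
    (hstat : ∀ a b k, ⟪u (a + k), u (b + k)⟫_𝕜 = ⟪u a, u b⟫_𝕜) {L : ℕ} {e : ℝ} (he : 0 < e)
    (ih : AverageCorrelationSmall 𝕜 u L (u 0) (e ^ 2 / 8)) {w : E} (hw : ‖w‖ ≤ 1) :
    AverageCorrelationSmall 𝕜 u (L + 1) w e := by
  obtain ⟨N₀, hN₀⟩ := ih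
  -- the bound `e ^ 2 / 8` turns van der Corput into `S ^ 2 ≤ N + e ^ 2 * N ^ 2 / 2`, which is at
  -- most `(e * N) ^ 2` once `N ≥ 2 / e ^ 2`
  refine ⟨max N₀ ⌈2 / e ^ 2⌉₊, fun N hN => ?_⟩
  obtain ⟨S', hS', hsmall⟩ := hN₀ N (le_of_max_le_left hN)
  have hNe : 2 / e ^ 2 ≤ N := Nat.ceil_le.mp (le_of_max_le_right hN)
  have hNpos : (0 : ℝ) < N := lt_of_lt_of_le (by positivity) hNe
  refine ⟨{d | e ^ 2 / 8 * N < #{r ∈ Icc 1 N | d * r ∈ S'}},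
    hS'.setOf_lt_card_filter_mul_mem (by positivity) (by exact_mod_cast hNpos),
    fun d hd q hq => ?_⟩
  have hrows : ∑ r ∈ Icc 1 N, ∑ n ∈ Icc 1 N, ‖⟪u 0, u (q (n + r) - q n)⟫_𝕜‖
      ≤ N * (e ^ 2 / 8 * N) + e ^ 2 / 8 * N * N := by
    refine (sum_le_card_mul_add_card_filter_mul (Icc 1 N) (fun r => d * r ∈ S') (B := N)
      (by positivity) (fun r _ hr => hsmall (d * r) hr (fun y => q (y + r) - q y) fun x => ?_)
      fun r _ => ?_).trans ?_
    · rw [fwdDiff_iter_sub_comp_add hq, Nat.cast_mul, mul_comm]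
    · refine (sum_le_card_nsmul _ _ 1 fun n _ => ?_).trans (by simp)
      exact (norm_inner_le_norm _ _).trans (mul_le_one₀ (hu _) (norm_nonneg _) (hu _))
    · rw [Nat.card_Icc, Nat.add_sub_cancel]
      gcongr
      exact not_lt.mp hd
  have hsq := sq_sum_norm_inner_le_vanDerCorput hu hstat hw q N
  have hN2 : (N : ℝ) ≤ e ^ 2 / 2 * N ^ 2 := by
    rw [div_le_iff₀ (by positivity)] at hNe
    nlinarith
  refine (pow_le_pow_iff_left₀ (sum_nonneg fun _ _ => norm_nonneg _) (by positivity)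
    two_ne_zero).mp ?_
  nlinarith

theorem averageCorrelationSmall (hu : ∀ k, ‖u k‖ ≤ 1)
    (hstat : ∀ a b k, ⟪u (a + k), u (b + k)⟫_𝕜 = ⟪u a, u b⟫_𝕜)
    (hwm : ∀ w : E, UniformlyCesaroNull fun n : ℕ => ‖⟪w, u n⟫_𝕜‖) (L : ℕ) :
    ∀ w : E, ‖w‖ ≤ 1 → ∀ e : ℝ, 0 < e → AverageCorrelationSmall 𝕜 u L w e := by
  induction L with
  | zero => exact fun w _ e he => averageCorrelationSmall_zero (hwm w) he
  | succ L ih => exact fun w hw e he => .succ hu hstat he (ih (u 0) (hu 0) _ (by positivity)) hw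

end StationarySequence

section Koopman

variable {X : Type*} [MeasurableSpace X] {μ : Measure X}

lemma Equiv.Perm.measurePreserving_zpow {T : Equiv.Perm X} (hT' : Measurable T.symm)
    (hmp : MeasurePreserving T μ μ) (k : ℤ) : MeasurePreserving ⇑(T ^ k) μ μ := by
  have hsymm : MeasurePreserving T.symm μ μ :=
    MeasurePreserving.symm (⟨T, hmp.measurable, hT'⟩ : X ≃ᵐ X) hmp
  rcases Int.eq_nat_or_neg k with ⟨n, rfl | rfl⟩
  · rw [zpow_natCast, Equiv.Perm.coe_pow]
    exact hmp.iterate n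
  · rw [zpow_neg, zpow_natCast, ← inv_pow, Equiv.Perm.coe_pow]
    exact hsymm.iterate n

lemma MeasureTheory.MemLp.norm_toLp_le_one {E : Type*} [NormedAddCommGroup E] {f : X → E}
    (hf : MemLp f 2 μ) (h1 : eLpNorm f 2 μ ≤ 1) : ‖hf.toLp f‖ ≤ 1 := by
  rw [Lp.norm_toLp]
  exact ENNReal.toReal_le_of_le_ofReal zero_le_one (by simpa using h1)

variable {T : Equiv.Perm X} (hT : ∀ k : ℤ, MeasurePreserving ⇑(T ^ k) μ μ)

def koopmanOrbit {E : Type*} [NormedAddCommGroup E] {p : ℝ≥0∞} (x : Lp E p μ) (k : ℤ) :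
    Lp E p μ :=
  Lp.compMeasurePreserving (⇑(T ^ k)) (hT k) x

lemma norm_koopmanOrbit {E : Type*} [NormedAddCommGroup E] {p : ℝ≥0∞} (x : Lp E p μ) (k : ℤ) :
    ‖koopmanOrbit hT x k‖ = ‖x‖ :=
  Lp.norm_compMeasurePreserving _ _

variable {𝕜 E : Type*} [RCLike 𝕜] [NormedAddCommGroup E] [InnerProductSpace 𝕜 E]

lemma inner_koopmanOrbit_add_add (x : Lp E 2 μ) (a b k : ℤ) :
    ⟪koopmanOrbit hT x (a + k), koopmanOrbit hT x (b + k)⟫_𝕜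
      = ⟪koopmanOrbit hT x a, koopmanOrbit hT x b⟫_𝕜 := by
  have hshift : ∀ j, koopmanOrbit hT x (j + k)
      = Lp.compMeasurePreserving (⇑(T ^ k)) (hT k) (koopmanOrbit hT x j) := fun j => by
    simp only [koopmanOrbit, ← Lp.compMeasurePreserving_comp_apply, zpow_add, Equiv.Perm.coe_mul]
  rw [hshift, hshift]
  exact (Lp.compMeasurePreservingₗᵢ (E := E) (p := 2) 𝕜 _ (hT k)).inner_map_map _ _

lemma inner_toLp_koopmanOrbit_toLp {f g : X → 𝕜} (hg : MemLp g 2 μ) (hf : MemLp f 2 μ) (k : ℤ) :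
    ⟪hg.toLp g, koopmanOrbit hT (hf.toLp f) k⟫_𝕜
      = ∫ x, f ((T ^ k) x) * (starRingEnd 𝕜) (g x) ∂μ := by
  rw [koopmanOrbit, Lp.toLp_compMeasurePreserving, L2.inner_def]
  refine integral_congr_ae ?_
  filter_upwards [hg.coeFn_toLp, (hf.comp_measurePreserving (hT k)).coeFn_toLp] with x hgx hfx
  rw [hgx, hfx, RCLike.inner_apply, Function.comp_apply]

end Koopman

theorem stmt17_general (ℓ : ℕ)
    {X : Type*} [MeasurableSpace X] (μ : Measure X)
    (T : Equiv.Perm X) (hT' : Measurable T.symm)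
    (hmp : MeasurePreserving (⇑T) μ μ)
    (h : X → ℂ) (hh : MemLp h 2 μ) (hhnorm : eLpNorm h 2 μ ≤ 1)
    (hwm : ∀ h'' : X → ℂ, MemLp h'' 2 μ → ∀ ε : ℝ, 0 < ε → ∃ L : ℕ,
      ∀ M N : ℕ, M + L ≤ N →
        (1 / (N - M : ℝ)) *
            (∑ n ∈ Finset.Ico M N, ‖∫ x, h ((T ^ (n : ℤ)) x) * (starRingEnd ℂ) (h'' x) ∂μ‖)
          < ε)
    (ε : ℝ) (hε : 0 < ε)
    (h' : X → ℂ) (hh' : MemLp h' 2 μ) (hh'norm : eLpNorm h' 2 μ ≤ 1) :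
    ∃ N₀ : ℕ, ∀ N : ℕ, N₀ ≤ N → ∃ D : Set ℕ,
      (∀ δ : ℝ, 0 < δ → ∃ N₁ : ℕ, ∀ N' : ℕ, N₁ ≤ N' → ∀ M : ℕ,
        (1 - δ) * (N' : ℝ) ≤
          ∑ n ∈ Finset.Icc M (M + N'), Set.indicator D (fun _ => (1 : ℝ)) n) ∧
      (∀ p : Polynomial ℤ, p.natDegree = ℓ →
        (∃ d ∈ D, fdiff^[ℓ] (fun m : ℤ => Polynomial.eval m p) 0 = (d : ℤ)) →
        (1 / (N : ℝ)) *
            (∑ n ∈ Finset.Icc 1 N,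
              ‖∫ x, h ((T ^ Polynomial.eval (n : ℤ) p) x) * (starRingEnd ℂ) (h' x) ∂μ‖)
          ≤ ε) := by
  have hTk := Equiv.Perm.measurePreserving_zpow hT' hmp
  set u := koopmanOrbit hTk (hh.toLp h)
  have hwm' : ∀ w : Lp ℂ 2 μ, UniformlyCesaroNull fun n : ℕ => ‖⟪w, u n⟫_ℂ‖ := fun w => by
    rw [← Lp.toLp_coeFn w (Lp.memLp w)]
    simp only [u, inner_toLp_koopmanOrbit_toLp]
    exact hwm w (Lp.memLp w)
  have hu : ∀ k, ‖u k‖ ≤ 1 := fun k =>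
    (norm_koopmanOrbit hTk _ k).trans_le (hh.norm_toLp_le_one hhnorm)
  obtain ⟨N₀, hN₀⟩ := averageCorrelationSmall hu (inner_koopmanOrbit_add_add hTk _) hwm' ℓ _
    (hh'.norm_toLp_le_one hh'norm) ε hε
  refine ⟨N₀, fun N hN => ?_⟩
  obtain ⟨S, hS, hsmall⟩ := hN₀ N hN
  refine ⟨Sᶜ, hS.compl_lowerBanachDensity_one, ?_⟩
  rintro p rfl ⟨d, hd, hpd⟩
  rw [fdiff_eq_fwdDiff] at hpd
  have hsum := hsmall d hd (fun m => p.eval m) fun x => by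
    rw [← hpd, p.fwdDiff_iter_natDegree_eval_apply, p.fwdDiff_iter_natDegree_eval_apply]
  simp only [u, inner_toLp_koopmanOrbit_toLp] at hsum
  rw [one_div_mul_eq_div]
  exact div_le_of_le_mul₀ (Nat.cast_nonneg _) hε.le hsum

/-- For a weakly mixing `h ∈ L²` with `‖h‖₂ ≤ 1`, any `h' ∈ L²` with `‖h'‖₂ ≤ 1`, any
`ε > 0` and any sufficiently large `N`, there is a set `D ⊆ ℕ` of lower Banach density one
such that `(1/N) ∑_{n=1}^N |⟨U^{p(n)} h, h'⟩| ≤ ε` for every `p ∈ ℤ[x]` of degree `ℓ` whose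
constant `ℓ`-th finite difference `Δ^ℓ p` lies in `D`.  Here `U^m h = h ∘ T^m` is the
Koopman operator. -/
theorem stmt17 (ℓ : ℕ)
    {X : Type*} [MeasurableSpace X] (μ : Measure X) [IsProbabilityMeasure μ]
    (T : Equiv.Perm X) (hT : Measurable T) (hT' : Measurable T.symm)
    (hmp : MeasurePreserving (⇑T) μ μ)
    (h : X → ℂ) (hh : MemLp h 2 μ) (hhnorm : eLpNorm h 2 μ ≤ 1)
    (hwm : ∀ h'' : X → ℂ, MemLp h'' 2 μ → ∀ ε : ℝ, 0 < ε → ∃ L : ℕ,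
      ∀ M N : ℕ, M + L ≤ N →
        (1 / (N - M : ℝ)) *
            (∑ n ∈ Finset.Ico M N, ‖∫ x, h ((T ^ (n : ℤ)) x) * (starRingEnd ℂ) (h'' x) ∂μ‖)
          < ε)
    (ε : ℝ) (hε : 0 < ε)
    (h' : X → ℂ) (hh' : MemLp h' 2 μ) (hh'norm : eLpNorm h' 2 μ ≤ 1) :
    ∃ N₀ : ℕ, ∀ N : ℕ, N₀ ≤ N → ∃ D : Set ℕ,
      (∀ δ : ℝ, 0 < δ → ∃ N₁ : ℕ, ∀ N' : ℕ, N₁ ≤ N' → ∀ M : ℕ,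
        (1 - δ) * (N' : ℝ) ≤
          ∑ n ∈ Finset.Icc M (M + N'), Set.indicator D (fun _ => (1 : ℝ)) n) ∧
      (∀ p : Polynomial ℤ, p.natDegree = ℓ →
        (∃ d ∈ D, fdiff^[ℓ] (fun m : ℤ => Polynomial.eval m p) 0 = (d : ℤ)) →
        (1 / (N : ℝ)) *
            (∑ n ∈ Finset.Icc 1 N,
              ‖∫ x, h ((T ^ Polynomial.eval (n : ℤ) p) x) * (starRingEnd ℂ) (h' x) ∂μ‖)
          ≤ ε) :=
  stmt17_general ℓ μ T hT' hmp h hh hhnorm hwm ε hε h' hh' hh'norm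
end
end
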